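/- Let p be a prime and n ≥ 2. For a ∈ (ℤ_p)^n define L̃_a : X̂_{n,p} → {−1,+1} by L̃_a(x) = 2·L_a(x) − 1, and equip real-valued functions on X̂_{n,p} with the inner product ⟨f,g⟩ = (1/(p^n − p)) Σ_{x∈X̂_{n,p}} f(x)g(x). Then for any two distinct a, b ∈ (ℤ_p)^n with a[0] = b[0] = 1, ⟨L̃_a, L̃_b⟩ = ((p² − 4p + 4)·p^{n−2} − p) / (p^n − p); in particular this value is the same for every pair of distinct normalized booleanized linear functions. -/

import Mathlib

/-!
Expanding the product, the sum of `L̃_a · L̃_b` over all of `(ℤ_p)ⁿ` is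
`4·#{a·x = 1 = b·x} - 2·#{a·x = 1} - 2·#{b·x = 1} + pⁿ`. Normalized `a ≠ b` are linearly
independent, so `x ↦ (a·x, b·x)` maps onto `ℤ_p²` and its fibres have `p^(n-2)` points
(those of `x ↦ a·x` have `p^(n-1)`). The `p` points missing from `X̂` are the `t·e₀`, where
`a·x = b·x = t`, so each of them contributes exactly `1`.
-/

def Xhat (n p : ℕ) : Set (Fin n → ZMod p) :=
  {x | ∃ i : Fin n, (i : ℕ) ≠ 0 ∧ x i ≠ 0}

open Finset Matrix

theorem AddMonoidHom.card_fiber_mul_card_of_surjective {G M F : Type*} [AddGroup G] [Fintype G]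
    [AddMonoid M] [Fintype M] [DecidableEq M] [FunLike F G M] [AddMonoidHomClass F G M]
    (f : F) (hf : Function.Surjective f) (y : M) :
    #{x | f x = y} * Fintype.card M = Fintype.card G := by
  calc #{x | f x = y} * Fintype.card M
      = ∑ z : M, #{x | f x = z} := by
        rw [sum_congr rfl fun z _ ↦ card_fiber_eq_of_mem_range f (hf z) (hf y), sum_const,
          card_univ, smul_eq_mul, mul_comm]
    _ = Fintype.card G := (card_eq_sum_card_fiberwise fun x _ ↦ mem_univ (f x)).symm

theorem Matrix.mulVec_surjective_of_linearIndependent_row {K m ι : Type*} [Field K] [Fintype m]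
    [Fintype ι] {A : Matrix m ι K} (hA : LinearIndependent K A.row) :
    Function.Surjective A.mulVec := by
  rw [← A.coe_mulVecLin, ← LinearMap.range_eq_top]
  apply Submodule.eq_top_of_finrank_eq
  rw [← Matrix.rank, hA.rank_matrix, Module.finrank_fintype_fun_eq_card]

theorem Matrix.card_mulVec_eq_of_linearIndependent_row {K m ι : Type*} [Field K] [Fintype K]
    [DecidableEq K] [Fintype m] [DecidableEq m] [Fintype ι] [DecidableEq ι] {A : Matrix m ι K}
    (hA : LinearIndependent K A.row) (y : m → K) :
    #{x | A *ᵥ x = y} = Fintype.card K ^ (Fintype.card ι - Fintype.card m) := by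
  have hle : Fintype.card m ≤ Fintype.card ι := by
    simpa using hA.fintype_card_le_finrank
  have hfiber := AddMonoidHom.card_fiber_mul_card_of_surjective A.mulVecLin
    (mulVec_surjective_of_linearIndependent_row hA) y
  simp only [Fintype.card_fun, coe_mulVecLin] at hfiber
  rw [← pow_sub_mul_pow _ hle] at hfiber
  exact Nat.eq_of_mul_eq_mul_right (pow_pos Fintype.card_pos _) hfiber

theorem linearIndependent_pair_of_apply_eq_one {K ι : Type*} [Field K] {a b : ι → K} (i : ι)
    (ha : a i = 1) (hb : b i = 1) (hab : a ≠ b) : LinearIndependent K ![a, b] := by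
  rw [LinearIndependent.pair_iff]
  intro s t hst
  have hts : t = -s := by
    have := congr_fun hst i
    simp only [Pi.add_apply, Pi.smul_apply, smul_eq_mul, ha, hb, Pi.zero_apply] at this
    linear_combination this
  subst hts
  have hs : s • (a - b) = 0 := by rw [smul_sub, sub_eq_add_neg, ← neg_smul, hst]
  have := (smul_eq_zero.mp hs).resolve_right (sub_ne_zero.mpr hab)
  simp [this]

theorem sum_sign_mul_sign {α R : Type*} [Fintype α] [CommRing R] (P Q : α → Prop)
    [DecidablePred P] [DecidablePred Q] :
    ∑ x, (2 * (if P x then (1 : R) else 0) - 1) * (2 * (if Q x then (1 : R) else 0) - 1)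
      = 4 * #{x | P x ∧ Q x} - 2 * #{x | P x} - 2 * #{x | Q x} + Fintype.card α := by
  have hexpand : ∀ x,
      (2 * (if P x then (1 : R) else 0) - 1) * (2 * (if Q x then (1 : R) else 0) - 1)
      = 4 * (if P x ∧ Q x then 1 else 0) - 2 * (if P x then 1 else 0)
        - 2 * (if Q x then 1 else 0) + 1 := by
    intro x
    by_cases hP : P x <;> by_cases hQ : Q x <;> simp [hP, hQ] <;> ring
  simp only [hexpand, sum_add_distrib, sum_sub_distrib, ← mul_sum, sum_boole, sum_const,
    card_univ, nsmul_eq_mul, mul_one]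

theorem compl_Xhat (n p : ℕ) : (Xhat (n + 1) p)ᶜ = Set.range (Pi.single 0) := by
  ext x
  simp only [Xhat, Set.mem_compl_iff, Set.mem_ofPred_eq, not_exists, not_and, not_not,
    Set.mem_range, Fin.val_ne_zero_iff]
  constructor
  · intro h
    refine ⟨x 0, funext fun i ↦ ?_⟩
    by_cases hi : i = 0
    · subst hi; simp
    · rw [Pi.single_eq_of_ne hi, h i hi]
  · rintro ⟨t, rfl⟩ i hi
    simp [hi]

theorem finsum_mem_Xhat {M : Type*} [AddCommGroup M] (n p : ℕ) [NeZero p]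
    (f : (Fin (n + 1) → ZMod p) → M) :
    ∑ᶠ x ∈ Xhat (n + 1) p, f x = ∑ x, f x - ∑ t, f (Pi.single 0 t) := by
  classical
  have hcompl : ({x | x ∉ Xhat (n + 1) p} : Finset _) =
      univ.map ⟨Pi.single 0, Pi.single_injective 0⟩ := by
    ext x
    simp [← Set.mem_compl_iff, compl_Xhat, eq_comm]
  rw [finsum_mem_eq_sum_of_subset f (t := {x | x ∈ Xhat (n + 1) p}) (fun x hx ↦ by simp [hx.1])
    (fun x ↦ by simp), eq_sub_iff_add_eq,
    ← sum_filter_add_sum_filter_not univ (· ∈ Xhat (n + 1) p) f, hcompl, sum_map]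
  rfl

theorem card_dotProduct_eq {K ι : Type*} [Field K] [Fintype K] [DecidableEq K] [Fintype ι]
    [DecidableEq ι] {a : ι → K} (ha : a ≠ 0) (c : K) :
    #{x | a ⬝ᵥ x = c} = Fintype.card K ^ (Fintype.card ι - 1) := by
  have := card_mulVec_eq_of_linearIndependent_row (A := of ![a])
    (linearIndependent_unique_iff.2 ha) ![c]
  simpa [cons_mulVec, funext_iff] using this

theorem card_dotProduct_eq_and {K ι : Type*} [Field K] [Fintype K] [DecidableEq K] [Fintype ι]
    [DecidableEq ι] {a b : ι → K} (hab : LinearIndependent K ![a, b]) (c d : K) :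
    #{x | a ⬝ᵥ x = c ∧ b ⬝ᵥ x = d} = Fintype.card K ^ (Fintype.card ι - 2) := by
  have := card_mulVec_eq_of_linearIndependent_row (A := of ![a, b]) hab ![c, d]
  simpa [cons_mulVec, funext_iff, Fin.forall_fin_two] using this

/-- any two distinct `±1`-valued normalized booleanized linear
functions `L̃_a = 2·L_a - 1` and `L̃_b` have inner product
`((p² - 4p + 4)·p^(n-2) - p) / (pⁿ - p)` with respect to the normalized inner
product on functions over `X̂_{n,p}`. -/
theorem stmt12 (n p : ℕ) (hp : p.Prime) (hn : 2 ≤ n)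
    (a b : Fin n → ZMod p) (hab : a ≠ b)
    (ha : ∀ i : Fin n, (i : ℕ) = 0 → a i = 1)
    (hb : ∀ i : Fin n, (i : ℕ) = 0 → b i = 1) :
    (1 / ((p : ℝ) ^ n - p)) *
        ∑ᶠ x ∈ Xhat n p,
          (2 * (if ∑ i, a i * x i = 1 then (1 : ℝ) else 0) - 1) *
            (2 * (if ∑ i, b i * x i = 1 then (1 : ℝ) else 0) - 1)
      = (((p : ℝ) ^ 2 - 4 * p + 4) * (p : ℝ) ^ (n - 2) - p) / ((p : ℝ) ^ n - p) := by
  obtain ⟨m, rfl⟩ : ∃ m, n = m + 2 := ⟨n - 2, by omega⟩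
  have : Fact p.Prime := ⟨hp⟩
  have ha0 : a 0 = 1 := ha 0 rfl
  have hb0 : b 0 = 1 := hb 0 rfl
  -- Not `simpa`: `card_dotProduct_eq` speaks of `⬝ᵥ` over `Field (ZMod p)`, the goal of `∑` over
  -- `CommRing (ZMod p)`, which agree only after unfolding.
  have hA : #{x : Fin (m + 2) → ZMod p | ∑ i, a i * x i = 1} = p ^ (m + 1) :=
    (card_dotProduct_eq (K := ZMod p) (a := a) (fun h ↦ by simp [h] at ha0) 1).trans (by simp)
  have hB : #{x : Fin (m + 2) → ZMod p | ∑ i, b i * x i = 1} = p ^ (m + 1) :=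
    (card_dotProduct_eq (K := ZMod p) (a := b) (fun h ↦ by simp [h] at hb0) 1).trans (by simp)
  have hAB : #{x : Fin (m + 2) → ZMod p | ∑ i, a i * x i = 1 ∧ ∑ i, b i * x i = 1} = p ^ m :=
    (card_dotProduct_eq_and (linearIndependent_pair_of_apply_eq_one 0 ha0 hb0 hab) 1 1).trans
      (by simp)
  have hline : ∀ t : ZMod p,
      (2 * (if ∑ i, a i * (Pi.single 0 t : Fin (m + 2) → ZMod p) i = 1 then (1 : ℝ) else 0) - 1) *
        (2 * (if ∑ i, b i * (Pi.single 0 t : Fin (m + 2) → ZMod p) i = 1 then (1 : ℝ) else 0) - 1)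
        = 1 := by
    intro t
    rw [← dotProduct, ← dotProduct, dotProduct_single, dotProduct_single, ha0, hb0, one_mul]
    split_ifs <;> norm_num
  rw [finsum_mem_Xhat, sum_sign_mul_sign]
  simp only [hA, hB, hAB, hline, sum_const, card_univ, ZMod.card, Fintype.card_fun, Fintype.card_fin]
  simp only [add_tsub_cancel_right, nsmul_eq_mul, mul_one, Nat.cast_pow, one_div_mul_eq_div]
  ring
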